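/- If a minimax-MDP satisfies the future-imposed conditions, then for every β ∈ {1,…,T} and every s_β ∈ F_{1→β}(s₁), one has L̃_β(s_β) ≥ L_β(s_β). -/
import Mathlib


/-- A minimax Markov Decision Process. -/
structure MinimaxMDP where
  /-- time horizon -/
  T : ℕ
  /-- ambient type of environment states -/
  State : Type
  /-- the ambient type of states is finite -/
  fintype_state : Fintype State
  /-- the set of environment states available at each time -/
  S : ℕ → Set State
  /-- the initial environment state -/
  s1 : State
  /-- the environment state transition map -/
  F : ℕ → State → Set State
  /-- lower action bounds -/
  U : ℕ → State → ℝ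
  /-- upper action bounds -/
  V : ℕ → State → ℝ
  /-- lower inventory bounds -/
  L : ℕ → State → ℝ
  /-- upper inventory bounds -/
  R : ℕ → State → ℝ

namespace MinimaxMDP

variable (M : MinimaxMDP)

/-- The structural hypotheses on a minimax-MDP. -/
def IsValid : Prop :=
  1 ≤ M.T ∧
  (∀ t, 1 ≤ t → t ≤ M.T → (M.S t).Nonempty) ∧
  M.s1 ∈ M.S 1 ∧
  (∀ t s, 1 ≤ t → t + 1 ≤ M.T → s ∈ M.S t → (M.F t s).Nonempty ∧ M.F t s ⊆ M.S (t + 1)) ∧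
  (∀ t s, 1 ≤ t → t + 1 ≤ M.T → s ∈ M.S t → M.U t s ≤ M.V t s) ∧
  M.L 1 M.s1 = 0 ∧ M.R 1 M.s1 = 0

/-- A compatible environment state trajectory on the time window `[α, β]`. -/
def EnvCompat (α β : ℕ) (s : ℕ → M.State) : Prop :=
  (∀ t, α ≤ t → t ≤ β → s t ∈ M.S t) ∧
  (∀ t, α ≤ t → t < β → s (t + 1) ∈ M.F t (s t))

/-- `F_{α→β}(a)`: the set of endpoints of compatible environment trajectories starting at `a`. -/
def Reach (α β : ℕ) (a : M.State) : Set M.State :=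
  {b | ∃ s : ℕ → M.State, M.EnvCompat α β s ∧ s α = a ∧ s β = b}

/-- `U_{α→β}(a, b)`: the maximal cumulative lower action bound along compatible trajectories. -/
noncomputable def Umax (α β : ℕ) (a b : M.State) : ℝ :=
  sSup {u | ∃ s : ℕ → M.State, M.EnvCompat α β s ∧ s α = a ∧ s β = b ∧
    u = ∑ t ∈ Finset.Ico α β, M.U t (s t)}

/-- `V_{α→β}(a, b)`: the minimal cumulative upper action bound along compatible trajectories. -/
noncomputable def Vmin (α β : ℕ) (a b : M.State) : ℝ :=
  sInf {v | ∃ s : ℕ → M.State, M.EnvCompat α β s ∧ s α = a ∧ s β = b ∧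
    v = ∑ t ∈ Finset.Ico α β, M.V t (s t)}

/-- `R_{β⇝α}(a)`. -/
noncomputable def Rto (β α : ℕ) (a : M.State) : ℝ :=
  sInf ((fun b => M.R β b - M.Umax α β a b) '' M.Reach α β a)

/-- `L_{β⇝α}(a)`. -/
noncomputable def Lto (β α : ℕ) (a : M.State) : ℝ :=
  sSup ((fun b => M.L β b - M.Vmin α β a b) '' M.Reach α β a)

/-- `R_{⋆⇝α}(a)`. -/
noncomputable def Rstar (α : ℕ) (a : M.State) : ℝ :=
  sInf ((fun β => M.Rto β α a) '' Set.Icc α M.T)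

/-- `L_{⋆⇝α}(a)`. -/
noncomputable def Lstar (α : ℕ) (a : M.State) : ℝ :=
  sSup ((fun β => M.Lto β α a) '' Set.Icc α M.T)

/-- `R_{⋆⇝α→[α+1]}(a)`. -/
noncomputable def RstarBr (α : ℕ) (a : M.State) : ℝ :=
  sInf ((fun b => M.Rstar (α + 1) b) '' M.F α a)

/-- `L_{⋆⇝α→[α+1]}(a)`. -/
noncomputable def LstarBr (α : ℕ) (a : M.State) : ℝ :=
  sSup ((fun b => M.Lstar (α + 1) b) '' M.F α a)

/-- The future-imposed conditions. -/
def FutureImposed : Prop :=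
  M.Lstar 1 M.s1 ≤ M.Rstar 1 M.s1 ∧
  ∀ α, 2 ≤ α → α ≤ M.T → ∀ a ∈ M.Reach 1 (α - 1) M.s1,
    M.LstarBr (α - 1) a ≤ M.RstarBr (α - 1) a

/-- A `π`-compatible partial trajectory on `[α, β]`. -/
def PiCompat (π : ℕ → M.State → ℝ → ℝ) (α β : ℕ) (s : ℕ → M.State) (x : ℕ → ℝ) : Prop :=
  M.EnvCompat α β s ∧ ∀ t, α ≤ t → t < β → x (t + 1) = x t + π t (s t) (x t)

/-- A feasible partial trajectory on `[α, β]`. -/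
def FeasibleTraj (α β : ℕ) (s : ℕ → M.State) (x : ℕ → ℝ) : Prop :=
  (∀ t, α ≤ t → t < β →
    M.U t (s t) ≤ x (t + 1) - x t ∧ x (t + 1) - x t ≤ M.V t (s t)) ∧
  (∀ t, α ≤ t → t ≤ β → M.L t (s t) ≤ x t ∧ x t ≤ M.R t (s t))

/-- A feasible policy: every `π`-compatible full trajectory is feasible. -/
def FeasiblePolicy (π : ℕ → M.State → ℝ → ℝ) : Prop :=
  ∀ s x, M.PiCompat π 1 M.T s x → s 1 = M.s1 → x 1 = 0 → M.FeasibleTraj 1 M.T s x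

end MinimaxMDP

namespace MinimaxMDP

variable (M : MinimaxMDP)

/-- `L̃_β(b)`: the minimum of `R_{⋆⇝1}(s₁) + V_{1→β}(s₁, b)` together with all quantities
`R_{⋆⇝α−1→[α]}(s_{α−1}) + V_{α→β}(s_α, b)` over `α ∈ {2,…,β}`, `s_{α−1} ∈ F_{1→α−1}(s₁)`
and `s_α ∈ F_{α−1}(s_{α−1})` with `b ∈ F_{α→β}(s_α)`. -/
noncomputable def Ltilde (β : ℕ) (b : M.State) : ℝ :=
  sInf (insert (M.Rstar 1 M.s1 + M.Vmin 1 β M.s1 b)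
    {r | ∃ α a a', 2 ≤ α ∧ α ≤ β ∧ a ∈ M.Reach 1 (α - 1) M.s1 ∧ a' ∈ M.F (α - 1) a ∧
      b ∈ M.Reach α β a' ∧ r = M.RstarBr (α - 1) a + M.Vmin α β a' b})

end MinimaxMDP

/-- **Claim.** If a minimax-MDP satisfies the future-imposed conditions, then for every
`β ∈ {1,…,T}` and every `s_β ∈ F_{1→β}(s₁)`, one has `L̃_β(s_β) ≥ L_β(s_β)`. -/
theorem Ltilde_ge_L (M : MinimaxMDP) (hM : M.IsValid) (hFIC : M.FutureImposed)
    (β : ℕ) (hβ1 : 1 ≤ β) (hβT : β ≤ M.T)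
    (b : M.State) (hb : b ∈ M.Reach 1 β M.s1) :
    M.L β b ≤ M.Ltilde β b := by
  haveI := M.fintype_state
  apply le_csInf ⟨_, Set.mem_insert _ _⟩
  intro r hr
  rcases hr with hr | ⟨α, a, a', hα2, hαβ, ha, ha', hb', hr⟩
  · -- r = Rstar 1 s1 + Vmin 1 β s1 b
    subst hr
    have h1 : M.L β b - M.Vmin 1 β M.s1 b ≤ M.Lto β 1 M.s1 :=
      le_csSup ((Set.toFinite _).image _).bddAbove ⟨b, hb, rfl⟩
    have h2 : M.Lto β 1 M.s1 ≤ M.Lstar 1 M.s1 :=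
      le_csSup ((Set.finite_Icc _ _).image _).bddAbove ⟨β, ⟨hβ1, hβT⟩, rfl⟩
    have h3 := hFIC.1
    linarith
  · subst hr
    have h1 : M.L β b - M.Vmin α β a' b ≤ M.Lto β α a' :=
      le_csSup ((Set.toFinite _).image _).bddAbove ⟨b, hb', rfl⟩
    have h2 : M.Lto β α a' ≤ M.Lstar α a' :=
      le_csSup ((Set.finite_Icc _ _).image _).bddAbove ⟨β, ⟨hαβ, hβT⟩, rfl⟩
    have hsub : α - 1 + 1 = α := Nat.sub_add_cancel (by omega)
    have h3 : M.Lstar α a' ≤ M.LstarBr (α - 1) a := by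
      unfold MinimaxMDP.LstarBr
      rw [hsub]
      exact le_csSup ((Set.toFinite _).image _).bddAbove ⟨a', ha', rfl⟩
    have h4 : M.LstarBr (α - 1) a ≤ M.RstarBr (α - 1) a :=
      hFIC.2 α hα2 (hαβ.trans hβT) a ha
    linarith
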